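/- Let 𝒞 be the set of maximal cliques of a binary undirected graphical model and let G = ∪_{C∈𝒞} G_C be the corresponding UGM hypergraph, where G_C is the complete hypergraph with node set C. If the family 𝒞 has the running intersection property, then the clique relaxation equals the multilinear polytope: MP^{cl}(G) = MP(G). -/

import Mathlib

open Finset

/-- The multilinear set of the hypergraph with node set `Vset` and edge set `E`. -/
def MultilinearSet {V : Type} [DecidableEq V] (Vset : Finset V) (E : Finset (Finset V)) :
    Set (Finset V → ℝ) :=
  {z | ∃ x : V → ℝ, (∀ v ∈ Vset, x v = 0 ∨ x v = 1) ∧ (∀ v ∈ Vset, z {v} = x v) ∧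
        ∀ e ∈ E, z e = ∏ v ∈ e, x v}

/-- The edge set of the UGM hypergraph of a clique family `𝒞`. -/
def ugmEdges {V : Type} [DecidableEq V] (𝒞 : Finset (Finset V)) : Finset (Finset V) :=
  𝒞.biUnion fun C => C.powerset.filter fun e => 2 ≤ e.card

/-- A finite family of sets has the running intersection property if it admits an ordering
`p 0, …, p (m-1)` such that for each `k ≥ 1` there is `j < k` with
`p k ∩ (∪_{i < k} p i) ⊆ p j`. -/
def HasRIP {α : Type} [DecidableEq α] (F : Finset (Finset α)) : Prop :=
  ∃ (m : ℕ) (p : Fin m → Finset α),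
    (∀ i, p i ∈ F) ∧ (∀ C ∈ F, ∃ i, p i = C) ∧ Function.Injective p ∧
      ∀ k : Fin m, (0 : ℕ) < (k : ℕ) →
        ∃ j : Fin m, j < k ∧
          p k ∩ (Finset.univ.filter fun i : Fin m => i < k).biUnion p ⊆ p j

/-!
A point `z` of `MP(G_C)` is the moment vector `z_S = P(S ⊆ T)` of a probability distribution
of a random subset `T ⊆ C`: the points of the multilinear set are the Dirac masses. Moments on
the subsets of `U ∩ W` determine the marginal on `U ∩ W` (Möbius inversion), so two
distributions on `U` and `W` with the same moments there glue, by making `T ∩ U` and `T ∩ W`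
conditionally independent given `T ∩ U ∩ W`, to one distribution on `U ∪ W` with the moments of
both. Along a running-intersection ordering each clique meets the union of its predecessors
inside one of them, where `z` already prescribes the moments; so the distributions of all
cliques glue to one distribution on all nodes, and its moments write `z` as a convex
combination of points of `S(G)`.
-/

namespace MultilinearPolytope

variable {V : Type} [DecidableEq V]

def moment (U : Finset V) (μ : Finset V → ℝ) (S : Finset V) : ℝ :=
  ∑ T ∈ U.powerset with S ⊆ T, μ T

def marginal (U W : Finset V) (μ : Finset V → ℝ) (R : Finset V) : ℝ :=
  ∑ T ∈ U.powerset with T ∩ W = R, μ T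

def IsDistribution (U : Finset V) (μ : Finset V → ℝ) : Prop :=
  (∀ T, 0 ≤ μ T) ∧ ∑ T ∈ U.powerset, μ T = 1

lemma moment_empty (U : Finset V) (μ : Finset V → ℝ) :
    moment U μ ∅ = ∑ T ∈ U.powerset, μ T := by
  simp [moment]

lemma sum_powerset_union {U X : Finset V} (hd : Disjoint U X) (f : Finset V → ℝ) :
    ∑ T ∈ (U ∪ X).powerset, f T =
      ∑ A ∈ U.powerset, ∑ D ∈ X.powerset, f (A ∪ D) := by
  have hinj : Set.InjOn (Function.uncurry (· ⊔ ·) : Finset V × Finset V → Finset V)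
      (U.powerset ×ˢ X.powerset : Finset _) := by
    rintro ⟨A, D⟩ h ⟨A', D'⟩ h' heq
    simp only [coe_product, Set.mem_prod, mem_coe, mem_powerset] at h h'
    simp only [Function.uncurry_apply_pair, sup_eq_union] at heq
    have hA : ∀ {A D : Finset V}, A ⊆ U → D ⊆ X → (A ∪ D) ∩ U = A := by
      intro A D hA hD; ext a; grind [disjoint_left]
    have hD : ∀ {A D : Finset V}, A ⊆ U → D ⊆ X → (A ∪ D) ∩ X = D := by
      intro A D hA hD; ext a; grind [disjoint_left]
    have hAA' := hA h.1 h.2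
    have hDD' := hD h.1 h.2
    rw [heq, hA h'.1 h'.2] at hAA'
    rw [heq, hD h'.1 h'.2] at hDD'
    rw [← hAA', ← hDD']
  rw [powerset_union, ← image_sup_product, sum_image hinj, sum_product]
  rfl

lemma sum_filter_superset_fiberwise {ι : Type*} (s : Finset ι) (P : Finset (Finset V))
    {g : ι → Finset V} (hg : ∀ i ∈ s, g i ∈ P) (w : ι → ℝ) (S : Finset V) :
    ∑ A ∈ P with S ⊆ A, ∑ i ∈ s with g i = A, w i = ∑ i ∈ s with S ⊆ g i, w i := by
  rw [← sum_fiberwise_of_maps_to (s := s.filter (S ⊆ g ·)) (t := P.filter (S ⊆ ·))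
    (fun i hi => by simp only [mem_filter] at hi ⊢; exact ⟨hg i hi.1, hi.2⟩)]
  refine sum_congr rfl fun A hA => ?_
  rw [filter_filter]
  exact sum_congr (filter_congr fun i _ => by grind) fun _ _ => rfl

lemma eq_of_sum_filter_superset_eq {P : Finset V} {f g : Finset V → ℝ}
    (h : ∀ S ⊆ P, ∑ R ∈ P.powerset with S ⊆ R, f R = ∑ R ∈ P.powerset with S ⊆ R, g R) :
    ∀ R ⊆ P, f R = g R := by
  -- A largest `R₀` with `f R₀ ≠ g R₀` would be the only differing term of the sums over
  -- the supersets of `R₀`.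
  by_contra! hne
  obtain ⟨R, hRP, hfg⟩ := hne
  obtain ⟨R₀, hR₀, hmax⟩ := exists_max_image (P.powerset.filter fun R => f R ≠ g R) card
    ⟨R, by simpa [hRP] using hfg⟩
  simp only [mem_filter, mem_powerset] at hR₀ hmax
  have hbig : ∀ R ∈ P.powerset.filter (R₀ ⊆ ·), R ≠ R₀ → f R = g R := by
    intro R hR hne
    simp only [mem_filter, mem_powerset] at hR
    by_contra hfg
    have := card_lt_card (ssubset_of_subset_of_ne hR.2 (Ne.symm hne))
    have := hmax R ⟨hR.1, hfg⟩
    omega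
  have hmem : R₀ ∈ P.powerset.filter (R₀ ⊆ ·) := by simp [hR₀.1]
  have := h R₀ hR₀.1
  rw [← add_sum_erase _ _ hmem, ← add_sum_erase _ _ hmem,
    sum_congr rfl fun R hR => hbig R (mem_of_mem_erase hR) (ne_of_mem_erase hR)] at this
  exact hR₀.2 (by linarith)

lemma moment_union {U X S : Finset V} {ρ : Finset V → ℝ} (hd : Disjoint U X)
    (hS : S ⊆ U) :
    moment (U ∪ X) ρ S = moment U (fun A => ∑ D ∈ X.powerset, ρ (A ∪ D)) S := by
  simp only [moment, sum_filter, sum_powerset_union hd]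
  refine sum_congr rfl fun A hA => ?_
  have hsub : ∀ D ∈ X.powerset, (S ⊆ A ∪ D ↔ S ⊆ A) := fun D hD => by
    simp only [mem_powerset] at hD
    grind [disjoint_left]
  split_ifs with hSA
  · exact sum_congr rfl fun D hD => if_pos ((hsub D hD).mpr hSA)
  · exact sum_eq_zero fun D hD => if_neg (mt (hsub D hD).mp hSA)

lemma marginal_eq_sum_powerset_sdiff (W U : Finset V) (ν : Finset V → ℝ) {R : Finset V}
    (hR : R ⊆ W ∩ U) :
    marginal W U ν R = ∑ D ∈ (W \ U).powerset, ν (R ∪ D) := by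
  have hW : W ∩ U ∪ W \ U = W := sup_inf_sdiff W U
  have hcut : ∀ R' ⊆ W ∩ U, ∀ D ∈ (W \ U).powerset, (R' ∪ D) ∩ U = R' := by
    intro R' hR' D hD
    simp only [mem_powerset] at hD
    ext a; grind
  conv_lhs =>
    rw [marginal, sum_filter, ← hW, sum_powerset_union (disjoint_sdiff_inter W U).symm]
  rw [sum_eq_single_of_mem R (mem_powerset.mpr hR)]
  · exact sum_congr rfl fun D hD => if_pos (hcut R hR D hD)
  · intro R' hR' hne
    exact sum_eq_zero fun D hD => if_neg (by rw [hcut R' (mem_powerset.mp hR') D hD]; exact hne)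

lemma marginal_nonneg {μ : Finset V → ℝ} (hμ : ∀ T, 0 ≤ μ T) (U W R : Finset V) :
    0 ≤ marginal U W μ R :=
  sum_nonneg fun T _ => hμ T

lemma eq_zero_of_marginal_eq_zero {μ : Finset V → ℝ} (hμ : ∀ T, 0 ≤ μ T) {U W A : Finset V}
    (hA : A ⊆ U) (h : marginal U W μ (A ∩ W) = 0) : μ A = 0 :=
  le_antisymm (h ▸ single_le_sum (fun T _ => hμ T) (by simpa using hA)) (hμ A)

lemma sum_marginal_eq_moment (U : Finset V) {W S : Finset V} (μ : Finset V → ℝ)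
    (hS : S ⊆ W) :
    ∑ R ∈ (U ∩ W).powerset with S ⊆ R, marginal U W μ R = moment U μ S := by
  simp only [marginal]
  rw [sum_filter_superset_fiberwise U.powerset (U ∩ W).powerset
    (fun T hT => mem_powerset.mpr (inter_subset_inter_right (mem_powerset.mp hT)))]
  exact sum_congr (filter_congr fun T _ => by rw [subset_inter_iff, and_iff_left hS])
    fun _ _ => rfl

lemma marginal_eq_of_moment_eq {U W : Finset V} {μ ν : Finset V → ℝ}
    (h : ∀ S ⊆ U ∩ W, moment U μ S = moment W ν S) :
    ∀ R ⊆ U ∩ W, marginal U W μ R = marginal W U ν R :=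
  eq_of_sum_filter_superset_eq fun S hS => by
    rw [sum_marginal_eq_moment U μ (hS.trans inter_subset_right), inter_comm U W,
      sum_marginal_eq_moment W ν (hS.trans inter_subset_left)]
    exact h S (inter_comm U W ▸ hS)

/-- The coupling of `μ` and `ν` that makes `T ∩ U` and `T ∩ W` conditionally independent given
`T ∩ U ∩ W`. When the marginals of `μ` and `ν` agree, `μ (T ∩ U)` vanishes wherever the
denominator does, so `x / 0 = 0` gives the right value. -/
noncomputable def glue (U W : Finset V) (μ ν : Finset V → ℝ) (T : Finset V) : ℝ :=
  μ (T ∩ U) * ν (T ∩ W) / marginal W U ν (T ∩ U ∩ W)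

lemma glue_comm {U W : Finset V} {μ ν : Finset V → ℝ}
    (hm : ∀ R ⊆ U ∩ W, marginal U W μ R = marginal W U ν R) :
    glue U W μ ν = glue W U ν μ := by
  funext T
  rw [glue, glue, inter_right_comm, hm (T ∩ W ∩ U) (by grind), mul_comm]

lemma sum_glue_union {U W A : Finset V} {μ ν : Finset V → ℝ} (hμ : ∀ T, 0 ≤ μ T)
    (hm : ∀ R ⊆ U ∩ W, marginal U W μ R = marginal W U ν R) (hA : A ⊆ U) :
    ∑ D ∈ (W \ U).powerset, glue U W μ ν (A ∪ D) = μ A := by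
  have hcut : ∀ D ∈ (W \ U).powerset, glue U W μ ν (A ∪ D) =
      μ A * ν (A ∩ W ∪ D) / marginal W U ν (A ∩ W) := by
    intro D hD
    simp only [mem_powerset] at hD
    have h1 : (A ∪ D) ∩ U = A := by ext a; grind
    have h2 : (A ∪ D) ∩ W = A ∩ W ∪ D := by ext a; grind
    rw [glue, h1, h2]
  have hAW : A ∩ W ⊆ W ∩ U := fun a ha => by grind
  rw [sum_congr rfl hcut, ← sum_div, ← mul_sum, ← marginal_eq_sum_powerset_sdiff W U ν hAW]
  by_cases h0 : marginal W U ν (A ∩ W) = 0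
  · rw [h0, div_zero]
    exact (eq_zero_of_marginal_eq_zero hμ hA (by rw [hm _ (by grind), h0])).symm
  · exact mul_div_cancel_right₀ _ h0

lemma moment_glue {U W S : Finset V} {μ ν : Finset V → ℝ} (hμ : ∀ T, 0 ≤ μ T)
    (hm : ∀ R ⊆ U ∩ W, marginal U W μ R = marginal W U ν R) (hS : S ⊆ U) :
    moment (U ∪ W) (glue U W μ ν) S = moment U μ S := by
  rw [← union_sdiff_self_eq_union, moment_union disjoint_sdiff hS]
  exact sum_congr rfl fun A hA =>
    sum_glue_union hμ hm (mem_powerset.mp (mem_of_mem_filter A hA))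

theorem exists_isDistribution_union {U W : Finset V} {μ ν : Finset V → ℝ}
    (hμ : IsDistribution U μ) (hν : IsDistribution W ν)
    (h : ∀ S ⊆ U ∩ W, moment U μ S = moment W ν S) :
    ∃ ρ, IsDistribution (U ∪ W) ρ ∧ (∀ S ⊆ U, moment (U ∪ W) ρ S = moment U μ S) ∧
      ∀ S ⊆ W, moment (U ∪ W) ρ S = moment W ν S := by
  have hm := marginal_eq_of_moment_eq h
  have hleft : ∀ S ⊆ U, moment (U ∪ W) (glue U W μ ν) S = moment U μ S :=
    fun S hS => moment_glue hμ.1 hm hS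
  have hright : ∀ S ⊆ W, moment (U ∪ W) (glue U W μ ν) S = moment W ν S := fun S hS => by
    rw [glue_comm hm, union_comm]
    exact moment_glue hν.1 (fun R hR => (hm R (inter_comm W U ▸ hR)).symm) hS
  refine ⟨glue U W μ ν, ⟨fun T => ?_, ?_⟩, hleft, hright⟩
  · exact div_nonneg (mul_nonneg (hμ.1 _) (hν.1 _)) (marginal_nonneg hν.1 _ _ _)
  · rw [← moment_empty, hleft ∅ (empty_subset U), moment_empty, hμ.2]

lemma multilinearSet_anti {U U' : Finset V} {E E' : Finset (Finset V)} (hU : U' ⊆ U)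
    (hE : E' ⊆ E) : MultilinearSet U E ⊆ MultilinearSet U' E' :=
  fun _ ⟨x, hx01, hxv, hxe⟩ =>
    ⟨x, fun v hv => hx01 v (hU hv), fun v hv => hxv v (hU hv), fun e he => hxe e (hE he)⟩

lemma mem_multilinearSet_of_eq_ite {U : Finset V} {E : Finset (Finset V)} {y : Finset V → ℝ}
    (T : Finset V) (hE : ∀ e ∈ E, y e = if e ⊆ T then 1 else 0)
    (hU : ∀ v ∈ U, y {v} = if v ∈ T then 1 else 0) :
    y ∈ MultilinearSet U E :=
  ⟨fun v => if v ∈ T then 1 else 0, fun v _ => by dsimp only; split_ifs <;> simp, hU,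
    fun e he => by rw [hE e he, prod_boole]; rfl⟩

lemma exists_eq_ite_of_mem_multilinearSet {U : Finset V} {E : Finset (Finset V)}
    {y : Finset V → ℝ} (hy : y ∈ MultilinearSet U E) :
    ∃ T ⊆ U, (∀ e ∈ E, e ⊆ U → y e = if e ⊆ T then 1 else 0) ∧
      ∀ v ∈ U, y {v} = if v ∈ T then 1 else 0 := by
  obtain ⟨x, hx01, hxv, hxe⟩ := hy
  have hx : ∀ v ∈ U, x v = if v ∈ U.filter (x · = 1) then 1 else 0 := by
    intro v hv
    rcases hx01 v hv with h | h <;> simp [h, hv]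
  refine ⟨U.filter (x · = 1), filter_subset _ _, fun e he heU => ?_,
    fun v hv => (hxv v hv).trans (hx v hv)⟩
  rw [hxe e he, prod_congr rfl fun v hv => hx v (heU hv), prod_boole]
  rfl

theorem exists_isDistribution_of_mem_convexHull {U : Finset V} {E : Finset (Finset V)}
    {z : Finset V → ℝ} (hz : z ∈ convexHull ℝ (MultilinearSet U E)) :
    ∃ μ, IsDistribution U μ ∧ (∀ e ∈ E, e ⊆ U → z e = moment U μ e) ∧
      ∀ v ∈ U, z {v} = moment U μ {v} := by
  rw [_root_.convexHull_eq] at hz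
  obtain ⟨ι, t, w, y, hw0, hw1, hy, rfl⟩ := hz
  choose! T hTU hTe hTv using fun i hi => exists_eq_ite_of_mem_multilinearSet (hy i hi)
  have hTmem : ∀ i ∈ t, T i ∈ U.powerset := fun i hi => mem_powerset.mpr (hTU i hi)
  let μ : Finset V → ℝ := fun A => ∑ i ∈ t with T i = A, w i
  have hmoment : ∀ S, (∀ i ∈ t, y i S = if S ⊆ T i then 1 else 0) →
      t.centerMass w y S = moment U μ S := by
    intro S hS
    rw [centerMass_eq_of_sum_1 _ _ hw1, moment, sum_filter_superset_fiberwise t _ hTmem,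
      Finset.sum_apply, sum_filter]
    refine sum_congr rfl fun i hi => ?_
    rw [Pi.smul_apply, hS i hi, smul_eq_mul, mul_ite, mul_one, mul_zero]
  refine ⟨μ, ⟨fun A => sum_nonneg fun i hi => hw0 i (mem_filter.mp hi).1, ?_⟩,
    fun e he heU => hmoment e fun i hi => hTe i hi e he heU,
    fun v hv => hmoment {v} fun i hi => by simp only [hTv i hi v hv, singleton_subset_iff]⟩
  rw [sum_fiberwise_of_maps_to hTmem, hw1]

theorem mem_convexHull_of_isDistribution {U : Finset V} {E : Finset (Finset V)}
    {z μ : Finset V → ℝ} (hμ : IsDistribution U μ) (hE : ∀ e ∈ E, z e = moment U μ e)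
    (hU : ∀ v ∈ U, z {v} = moment U μ {v}) :
    z ∈ convexHull ℝ (MultilinearSet U E) := by
  classical
  let IsConstrained : Finset V → Prop := fun S => S ∈ E ∨ ∃ v ∈ U, S = {v}
  have hz : ∀ S, IsConstrained S → z S = moment U μ S := by
    rintro S (hS | ⟨v, hv, rfl⟩)
    exacts [hE S hS, hU v hv]
  -- `MultilinearSet U E` leaves the other coordinates free, so they are copied from `z`.
  let vertex : Finset V → Finset V → ℝ := fun T S =>
    if IsConstrained S then (if S ⊆ T then 1 else 0) else z S
  have hvertex : ∀ T, vertex T ∈ MultilinearSet U E := fun T =>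
    mem_multilinearSet_of_eq_ite T (fun e he => if_pos (Or.inl he))
      fun v hv => by
        have hv : IsConstrained {v} := Or.inr ⟨v, hv, rfl⟩
        simp only [vertex, hv, if_true, singleton_subset_iff]
  have hsum : z = ∑ T ∈ U.powerset, μ T • vertex T := by
    funext S
    simp only [Finset.sum_apply, Pi.smul_apply, smul_eq_mul, vertex]
    split_ifs with hS
    · simp only [hz S hS, moment, sum_filter, mul_ite, mul_one, mul_zero]
    · rw [← sum_mul, hμ.2, one_mul]
  rw [hsum]
  exact (convex_convexHull ℝ _).sum_mem (fun T _ => hμ.1 T) hμ.2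
    fun T _ => subset_convexHull ℝ _ (hvertex T)

lemma exists_isDistribution_of_mem_convexHull_complete {C : Finset V} {z : Finset V → ℝ}
    (hz : z ∈ convexHull ℝ (MultilinearSet C (C.powerset.filter fun e => 2 ≤ e.card))) :
    ∃ μ, IsDistribution C μ ∧ ∀ S ⊆ C, S.Nonempty → z S = moment C μ S := by
  obtain ⟨μ, hμ, hE, hV⟩ := exists_isDistribution_of_mem_convexHull hz
  refine ⟨μ, hμ, fun S hSC hS => ?_⟩
  obtain hcard | hcard := (Nat.one_le_iff_ne_zero.mpr (card_ne_zero.mpr hS)).eq_or_lt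
  · obtain ⟨v, rfl⟩ := card_eq_one.mp hcard.symm
    exact hV v (singleton_subset_iff.mp hSC)
  · exact hE S (mem_filter.mpr ⟨mem_powerset.mpr hSC, hcard⟩) hSC

lemma biUnion_filter_val_lt_succ {m : ℕ} (p : Fin m → Finset V) (K : Fin m) :
    (univ.filter fun i : Fin m => (i : ℕ) < K + 1).biUnion p =
      (univ.filter fun i : Fin m => (i : ℕ) < K).biUnion p ∪ p K := by
  ext v
  simp only [mem_union, mem_biUnion, mem_filter, mem_univ, true_and, Nat.lt_succ_iff_lt_or_eq]
  constructor
  · rintro ⟨i, hi | hi, hv⟩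
    exacts [Or.inl ⟨i, hi, hv⟩, Or.inr ((Fin.ext hi : i = K) ▸ hv)]
  · rintro (⟨i, hi, hv⟩ | hv)
    exacts [⟨i, Or.inl hi, hv⟩, ⟨K, Or.inr rfl, hv⟩]

theorem exists_isDistribution_biUnion_of_runningIntersection {m : ℕ} {p : Fin m → Finset V}
    (hrip : ∀ k : Fin m, 0 < (k : ℕ) →
      ∃ j < k, p k ∩ (univ.filter fun i : Fin m => i < k).biUnion p ⊆ p j)
    {z : Finset V → ℝ}
    (hloc : ∀ i, ∃ μ, IsDistribution (p i) μ ∧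
      ∀ S ⊆ p i, S.Nonempty → z S = moment (p i) μ S) :
    ∃ μ, IsDistribution (univ.biUnion p) μ ∧
      ∀ i, ∀ S ⊆ p i, S.Nonempty → z S = moment (univ.biUnion p) μ S := by
  let pre : ℕ → Finset V := fun k => (univ.filter fun i : Fin m => (i : ℕ) < k).biUnion p
  suffices h : ∀ k ≤ m, ∃ μ, IsDistribution (pre k) μ ∧
      ∀ i : Fin m, (i : ℕ) < k → ∀ S ⊆ p i, S.Nonempty → z S = moment (pre k) μ S by
    have hpre : pre m = univ.biUnion p := by simp [pre]
    obtain ⟨μ, hμ, hzμ⟩ := h m le_rfl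
    exact ⟨μ, hpre ▸ hμ, fun i => hpre ▸ hzμ i i.isLt⟩
  intro k hk
  induction k with
  | zero =>
    refine ⟨Pi.single ∅ 1, ⟨fun T => ?_, by simp [pre]⟩,
      fun i hi => absurd hi (Nat.not_lt_zero _)⟩
    by_cases hT : T = ∅ <;> simp [hT]
  | succ k ih =>
    obtain ⟨μ, hμ, hzμ⟩ := ih (by omega)
    let K : Fin m := ⟨k, hk⟩
    obtain ⟨ν, hν, hzν⟩ := hloc K
    have hsep : ∀ S ⊆ pre k ∩ p K, moment (pre k) μ S = moment (p K) ν S := by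
      intro S hS
      rcases S.eq_empty_or_nonempty with rfl | hne
      · rw [moment_empty, moment_empty, hμ.2, hν.2]
      obtain ⟨i, hi, -⟩ := mem_biUnion.mp (inter_subset_left (hS hne.choose_spec))
      obtain ⟨j, hjK, hj⟩ := hrip K (by simp only [mem_filter] at hi; show 0 < k; omega)
      rw [show (univ.filter fun i : Fin m => i < K).biUnion p = pre k from rfl,
        inter_comm] at hj
      rw [← hzμ j hjK S (hS.trans hj) hne, hzν S (hS.trans inter_subset_right) hne]
    obtain ⟨ρ, hρ, hρμ, hρν⟩ := exists_isDistribution_union hμ hν hsep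
    have hpre : pre (k + 1) = pre k ∪ p K := biUnion_filter_val_lt_succ p K
    refine ⟨ρ, hpre ▸ hρ, fun i hi S hS hne => ?_⟩
    rw [hpre]
    obtain hi | rfl : (i : ℕ) < k ∨ i = K := (Nat.lt_succ_iff_lt_or_eq.mp hi).imp_right Fin.ext
    · rw [hρμ S (hS.trans (subset_biUnion_of_mem p (by simp [hi])))]
      exact hzμ i hi S hS hne
    · rw [hρν S hS]
      exact hzν S hS hne
end MultilinearPolytope

open MultilinearPolytope in
theorem clique_relaxation_eq_multilinear_polytope_general {V : Type} [DecidableEq V]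
    (𝒞 : Finset (Finset V))
    (hRIP : HasRIP 𝒞) :
    {z : Finset V → ℝ | ∀ C ∈ 𝒞,
        z ∈ convexHull ℝ (MultilinearSet C (C.powerset.filter fun e => 2 ≤ e.card))} =
      convexHull ℝ (MultilinearSet (𝒞.sup id) (ugmEdges 𝒞)) := by
  obtain ⟨m, p, hp𝒞, h𝒞p, -, hrip⟩ := hRIP
  have hsup : 𝒞.sup id = univ.biUnion p := by
    ext v
    simp only [mem_sup, id, mem_biUnion, mem_univ, true_and]
    constructor
    · rintro ⟨C, hC, hv⟩
      obtain ⟨i, rfl⟩ := h𝒞p C hC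
      exact ⟨i, hv⟩
    · rintro ⟨i, hv⟩
      exact ⟨p i, hp𝒞 i, hv⟩
  refine Set.Subset.antisymm (fun z hz => ?_) fun z hz C hC => ?_
  · obtain ⟨μ, hμ, hzμ⟩ := exists_isDistribution_biUnion_of_runningIntersection hrip
      fun i => exists_isDistribution_of_mem_convexHull_complete (hz (p i) (hp𝒞 i))
    rw [hsup]
    refine mem_convexHull_of_isDistribution hμ (fun e he => ?_) fun v hv => ?_
    · obtain ⟨C, hC, he⟩ := mem_biUnion.mp he
      obtain ⟨i, rfl⟩ := h𝒞p C hC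
      rw [mem_filter, mem_powerset] at he
      exact hzμ i e he.1 (card_pos.mp (by omega))
    · obtain ⟨i, -, hv⟩ := mem_biUnion.mp hv
      exact hzμ i {v} (singleton_subset_iff.mpr hv) (singleton_nonempty v)
  · refine convexHull_mono (multilinearSet_anti ?_ ?_) hz
    exacts [fun v hv => mem_sup.mpr ⟨C, hC, hv⟩, fun e he => mem_biUnion.mpr ⟨C, hC, he⟩]

/-- if the family `𝒞` of maximal cliques has the running intersection property,
then the clique relaxation equals the multilinear polytope of the UGM hypergraph
`G = ∪_{C ∈ 𝒞} G_C`. -/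
theorem clique_relaxation_eq_multilinear_polytope {V : Type} [Fintype V] [DecidableEq V]
    (𝒞 : Finset (Finset V))
    (hmax : ∀ C ∈ 𝒞, ∀ C' ∈ 𝒞, C ⊆ C' → C = C')
    (hRIP : HasRIP 𝒞) :
    {z : Finset V → ℝ | ∀ C ∈ 𝒞,
        z ∈ convexHull ℝ (MultilinearSet C (C.powerset.filter fun e => 2 ≤ e.card))} =
      convexHull ℝ (MultilinearSet (𝒞.sup id) (ugmEdges 𝒞)) :=
  clique_relaxation_eq_multilinear_polytope_general 𝒞 hRIP
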